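/- Let C be a triangulated category equipped with a weight structure w, let m ≤ n be integers, and let X → O → Y → X[1] be a distinguished triangle with X ∈ C_{w≤m−1} and Y ∈ C_{w≥n+1} (a decomposition of O avoiding weights m,…,n). Then: (a) for every integer l with m−1 ≤ l ≤ n, this triangle is an l-weight decomposition of O; (b) O is without weights m,…,n; and (c) the triangle is unique up to isomorphism: if X' → O → Y' → X'[1] is another distinguished triangle with X' ∈ C_{w≤m−1} and Y' ∈ C_{w≥n+1}, then there exist isomorphisms a : X → X' and b : Y → Y' such that (a, id_O, b) is an isomorphism of distinguished triangles. -/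

import Mathlib

open CategoryTheory CategoryTheory.Limits CategoryTheory.Pretriangulated ZeroObject

universe v u

variable (C : Type u) [Category.{v} C] [HasZeroObject C] [Preadditive C] [HasShift C ℤ]
  [∀ n : ℤ, (shiftFunctor C n).Additive] [Pretriangulated C]

/-- A weight structure on a triangulated category `C`: a pair of retract-closed classes
`le = C_{w≤0}` and `ge = C_{w≥0}` satisfying semi-invariance with respect to translations,
orthogonality, and the existence of weight decompositions. -/
structure WeightStructure where
  /-- the class `C_{w≤0}` -/
  le : Set C
  /-- the class `C_{w≥0}` -/
  ge : Set C
  /-- `C_{w≤0}` is closed under retracts -/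
  le_retract : ∀ ⦃X Y : C⦄ (i : X ⟶ Y) (r : Y ⟶ X), i ≫ r = 𝟙 X → le Y → le X
  /-- `C_{w≥0}` is closed under retracts -/
  ge_retract : ∀ ⦃X Y : C⦄ (i : X ⟶ Y) (r : Y ⟶ X), i ≫ r = 𝟙 X → ge Y → ge X
  /-- `C_{w≤0} ⊆ C_{w≤0}[1]`, i.e. `X ∈ C_{w≤0} → X[-1] ∈ C_{w≤0}` -/
  le_shift : ∀ ⦃X : C⦄, le X → le ((shiftFunctor C (-1 : ℤ)).obj X)
  /-- `C_{w≥0}[1] ⊆ C_{w≥0}`, i.e. `X ∈ C_{w≥0} → X[1] ∈ C_{w≥0}` -/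
  ge_shift : ∀ ⦃X : C⦄, ge X → ge ((shiftFunctor C (1 : ℤ)).obj X)
  /-- orthogonality: `Hom(X, Y[1]) = 0` for `X ∈ C_{w≤0}`, `Y ∈ C_{w≥0}` -/
  orth : ∀ ⦃X Y : C⦄, le X → ge Y → ∀ f : X ⟶ (shiftFunctor C (1 : ℤ)).obj Y, f = 0
  /-- existence of weight decompositions -/
  decomp : ∀ M : C, ∃ (X Y : C) (f : X ⟶ M) (g : M ⟶ Y)
      (h : Y ⟶ (shiftFunctor C (1 : ℤ)).obj X),
      Triangle.mk f g h ∈ (distTriang C) ∧ le X ∧ ge ((shiftFunctor C (-1 : ℤ)).obj Y)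

variable {C}

namespace WeightStructure

/-- `X ∈ C_{w≤i} = C_{w≤0}[i]`, i.e. `X[-i] ∈ C_{w≤0}`. -/
def leDeg (w : WeightStructure C) (i : ℤ) (X : C) : Prop :=
  w.le ((shiftFunctor C (-i)).obj X)

/-- `X ∈ C_{w≥i} = C_{w≥0}[i]`, i.e. `X[-i] ∈ C_{w≥0}`. -/
def geDeg (w : WeightStructure C) (i : ℤ) (X : C) : Prop :=
  w.ge ((shiftFunctor C (-i)).obj X)

/-- The triangle `A → M → B → A[1]` is an `m`-weight decomposition of `M`:
it is distinguished, `A ∈ C_{w≤m}` and `B ∈ C_{w≥m+1}`. -/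
def IsWeightDecomp (w : WeightStructure C) (m : ℤ) {A M B : C}
    (f : A ⟶ M) (g : M ⟶ B) (h : B ⟶ (shiftFunctor C (1 : ℤ)).obj A) : Prop :=
  Triangle.mk f g h ∈ (distTriang C) ∧ w.leDeg m A ∧ w.geDeg (m + 1) B

/-- `g : M ⟶ N` kills weights `m,…,n`: there exist an `n`-weight decomposition of `M` and an
`(m-1)`-weight decomposition of `N` such that the composite `w_{≤n}M → M → N → w_{≥m}N` is `0`. -/
def KillsWeights (w : WeightStructure C) (m n : ℤ) {M N : C} (g : M ⟶ N) : Prop :=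
  ∃ (A B A' B' : C) (f : A ⟶ M) (p : M ⟶ B) (δ : B ⟶ (shiftFunctor C (1 : ℤ)).obj A)
    (f' : A' ⟶ N) (p' : N ⟶ B') (δ' : B' ⟶ (shiftFunctor C (1 : ℤ)).obj A'),
    w.IsWeightDecomp n f p δ ∧ w.IsWeightDecomp (m - 1) f' p' δ' ∧ f ≫ g ≫ p' = 0

/-- `M` is without weights `m,…,n` if `𝟙 M` kills weights `m,…,n`. -/
def WithoutWeights (w : WeightStructure C) (m n : ℤ) (M : C) : Prop :=
  w.KillsWeights m n (𝟙 M)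

end WeightStructure

/-! Everything follows from the orthogonality `Hom(C_{w≤m-1}, C_{w≥m}) = 0`. It kills `f ≫ p'`
and `f' ≫ p`, so `f` and `f'` factor through each other. It also kills maps `X → Y⟦-1⟧`, so by the
long exact sequence a map into `X` is determined by its composite with `f`; hence the two factorings
are mutually inverse, and the isomorphism on first terms extends to one of triangles. -/

namespace CategoryTheory.Pretriangulated

lemma eq_of_comp_mor₁_eq {X O Y : C} {f : X ⟶ O} {p : O ⟶ Y} {δ : Y ⟶ X⟦(1 : ℤ)⟧}
    (hT : Triangle.mk f p δ ∈ distTriang C) {B : C} (hB : ∀ t : B ⟶ Y⟦(-1 : ℤ)⟧, t = 0)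
    {u v : B ⟶ X} (huv : u ≫ f = v ≫ f) : u = v := by
  rw [← sub_eq_zero]
  obtain ⟨t, ht⟩ := Triangle.coyoneda_exact₂ _ (inv_rot_of_distTriang _ hT) (u - v)
    (show (u - v) ≫ f = 0 by rw [Preadditive.sub_comp, huv, sub_self])
  rw [ht, show t = 0 from hB t]
  exact zero_comp

lemma exists_iso_of_distTriang_of_hom_eq_zero {X X' O Y Y' : C}
    (f : X ⟶ O) (p : O ⟶ Y) (δ : Y ⟶ X⟦(1 : ℤ)⟧) (f' : X' ⟶ O) (p' : O ⟶ Y')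
    (δ' : Y' ⟶ X'⟦(1 : ℤ)⟧) (hT : Triangle.mk f p δ ∈ distTriang C)
    (hT' : Triangle.mk f' p' δ' ∈ distTriang C)
    (hXY' : ∀ u : X ⟶ Y', u = 0) (hX'Y : ∀ u : X' ⟶ Y, u = 0)
    (hXY : ∀ u : X ⟶ Y⟦(-1 : ℤ)⟧, u = 0) (hX'Y' : ∀ u : X' ⟶ Y'⟦(-1 : ℤ)⟧, u = 0) :
    ∃ (a : X ≅ X') (b : Y ≅ Y'),
      f = a.hom ≫ f' ∧ p ≫ b.hom = p' ∧ δ ≫ a.hom⟦(1 : ℤ)⟧' = b.hom ≫ δ' := by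
  obtain ⟨a, ha⟩ : ∃ a : X ⟶ X', f = a ≫ f' := Triangle.coyoneda_exact₂ _ hT' f (hXY' _)
  obtain ⟨a', ha'⟩ : ∃ a' : X' ⟶ X, f' = a' ≫ f := Triangle.coyoneda_exact₂ _ hT f' (hX'Y _)
  let e : X ≅ X' :=
    { hom := a
      inv := a'
      hom_inv_id := eq_of_comp_mor₁_eq hT hXY
        (by rw [Category.assoc, ← ha', ← ha, Category.id_comp])
      inv_hom_id := eq_of_comp_mor₁_eq hT' hX'Y'
        (by rw [Category.assoc, ← ha, ← ha', Category.id_comp]) }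
  obtain ⟨φ, hφ₁, hφ₂⟩ : ∃ φ : Triangle.mk f p δ ≅ Triangle.mk f' p' δ',
      φ.hom.hom₁ = a ∧ φ.hom.hom₂ = 𝟙 O := exists_iso_of_arrow_iso _ _ hT hT'
    (Arrow.isoMk e (Iso.refl O) (ha.symm.trans (Category.comp_id f).symm))
  refine ⟨e, Triangle.π₃.mapIso φ, ha, ?_, ?_⟩
  · exact φ.hom.comm₂.trans (by rw [hφ₂]; exact Category.id_comp p')
  · change δ ≫ a⟦(1 : ℤ)⟧' = _
    rw [← hφ₁]
    exact φ.hom.comm₃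

end CategoryTheory.Pretriangulated

namespace WeightStructure

variable (w : WeightStructure C)

lemma le_of_iso {X Y : C} (e : X ≅ Y) (h : w.le Y) : w.le X :=
  w.le_retract e.hom e.inv e.hom_inv_id h

lemma ge_of_iso {X Y : C} (e : X ≅ Y) (h : w.ge Y) : w.ge X :=
  w.ge_retract e.hom e.inv e.hom_inv_id h

lemma leDeg_mono {a b : ℤ} (hab : a ≤ b) {X : C} (h : w.leDeg a X) : w.leDeg b X :=
  Int.leInduction h (fun b _ ih => w.le_of_iso
    ((shiftFunctorAdd' C (-b) (-1) (-(b + 1)) (by ring)).app X) (w.le_shift ih)) b hab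

lemma geDeg_anti {a b : ℤ} (hab : a ≤ b) {Y : C} (h : w.geDeg b Y) : w.geDeg a Y :=
  Int.leInduction (motive := fun b _ => w.geDeg b Y → w.geDeg a Y) id
    (fun b _ ih h => ih (w.ge_of_iso
      ((shiftFunctorAdd' C (-(b + 1)) 1 (-b) (by ring)).app Y) (w.ge_shift h))) b hab h

lemma geDeg_shift_neg_one {n : ℤ} {Y : C} (h : w.geDeg (n + 1) Y) :
    w.geDeg n (Y⟦(-1 : ℤ)⟧) :=
  w.ge_of_iso ((shiftFunctorAdd' C (-1) (-n) (-(n + 1)) (by ring)).app Y).symm h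

lemma hom_eq_zero_of_leDeg_of_geDeg {a b : ℤ} (hab : a < b) {X Y : C} (hX : w.leDeg a X)
    (hY : w.geDeg b Y) (g : X ⟶ Y) : g = 0 := by
  let e : Y⟦-a⟧ ≅ (Y⟦-(a + 1)⟧)⟦(1 : ℤ)⟧ :=
    (shiftFunctorAdd' C (-(a + 1)) 1 (-a) (by ring)).app Y
  have hg : g⟦-a⟧' ≫ e.hom = 0 := w.orth hX (w.geDeg_anti (by omega) hY) _
  apply (shiftFunctor C (-a)).map_injective
  rw [Functor.map_zero, ← cancel_mono e.hom, hg, zero_comp]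

lemma isWeightDecomp_of_le {m n l : ℤ} {X O Y : C} {f : X ⟶ O} {p : O ⟶ Y}
    {δ : Y ⟶ X⟦(1 : ℤ)⟧} (hT : Triangle.mk f p δ ∈ distTriang C)
    (hX : w.leDeg (m - 1) X) (hY : w.geDeg (n + 1) Y) (hml : m - 1 ≤ l) (hln : l ≤ n) :
    w.IsWeightDecomp l f p δ :=
  ⟨hT, w.leDeg_mono hml hX, w.geDeg_anti (by omega) hY⟩

lemma withoutWeights_of_isWeightDecomp {m n : ℤ} {X O Y : C} {f : X ⟶ O} {p : O ⟶ Y}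
    {δ : Y ⟶ X⟦(1 : ℤ)⟧} (hn : w.IsWeightDecomp n f p δ) (hm : w.IsWeightDecomp (m - 1) f p δ) :
    w.WithoutWeights m n O :=
  ⟨X, Y, X, Y, f, p, δ, f, p, δ, hn, hm,
    by rw [Category.id_comp]; exact comp_distTriang_mor_zero₁₂ _ hn.1⟩

end WeightStructure

/-- Theorem 2.1.1(7): a distinguished triangle `X → O → Y → X[1]` with `X ∈ C_{w≤m-1}` and
`Y ∈ C_{w≥n+1}` (a decomposition of `O` avoiding weights `m,…,n`) is an `l`-weight
decomposition of `O` for all `m-1 ≤ l ≤ n`; moreover `O` is without weights `m,…,n` and the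
triangle is unique up to a (canonical) isomorphism. -/
theorem avoidingWeights_decomposition_properties (w : WeightStructure C) (m n : ℤ) (hmn : m ≤ n)
    {X O Y : C} (f : X ⟶ O) (p : O ⟶ Y) (δ : Y ⟶ (shiftFunctor C (1 : ℤ)).obj X)
    (hdist : Triangle.mk f p δ ∈ distTriang C)
    (hX : w.leDeg (m - 1) X) (hY : w.geDeg (n + 1) Y) :
    (∀ l : ℤ, m - 1 ≤ l → l ≤ n → w.IsWeightDecomp l f p δ) ∧
    w.WithoutWeights m n O ∧
    (∀ ⦃X' Y' : C⦄ (f' : X' ⟶ O) (p' : O ⟶ Y') (δ' : Y' ⟶ (shiftFunctor C (1 : ℤ)).obj X'),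
      Triangle.mk f' p' δ' ∈ (distTriang C) → w.leDeg (m - 1) X' → w.geDeg (n + 1) Y' →
      ∃ (a : X ≅ X') (b : Y ≅ Y'),
        f = a.hom ≫ f' ∧ p ≫ b.hom = p' ∧
        δ ≫ (shiftFunctor C (1 : ℤ)).map a.hom = b.hom ≫ δ') := by
  have hdecomp (l : ℤ) (h₁ : m - 1 ≤ l) (h₂ : l ≤ n) : w.IsWeightDecomp l f p δ :=
    w.isWeightDecomp_of_le hdist hX hY h₁ h₂
  refine ⟨hdecomp, w.withoutWeights_of_isWeightDecomp (hdecomp n (by omega) le_rfl)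
    (hdecomp (m - 1) le_rfl (by omega)), ?_⟩
  intro X' Y' f' p' δ' hdist' hX' hY'
  have orth {A B : C} (hA : w.leDeg (m - 1) A) (hB : w.geDeg n B) (g : A ⟶ B) : g = 0 :=
    w.hom_eq_zero_of_leDeg_of_geDeg (by omega) hA hB g
  exact exists_iso_of_distTriang_of_hom_eq_zero f p δ f' p' δ' hdist hdist'
    (orth hX (w.geDeg_anti (by omega) hY')) (orth hX' (w.geDeg_anti (by omega) hY))
    (orth hX (w.geDeg_shift_neg_one hY)) (orth hX' (w.geDeg_shift_neg_one hY'))
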